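/- arXiv:2205.05217 — 4 statements merged into one kernel-verified Lean document; each statement's English description precedes it below -/
import Mathlib

section
/- Discrete global kinetic energy conservation: on a periodic 1D grid, if the momentum convective flux satisfies M(m+1/2) = C(m+1/2)·(u(m)+u(m+1))/2 for a mass flux C, then the sum over all cells m of u(m)·(M(m+1/2) − M(m−1/2)) equals the sum over all cells of (1/2)u(m)²·(C(m+1/2) − C(m−1/2)) plus the telescoping (hence zero) sum of K(m+1/2) − K(m−1/2), where K(m+1/2) := C(m+1/2)·u(m)u(m+1)/2. In particular, Σ_m [u(m)·(M(m+1/2)−M(m−1/2)) − (1/2)u(m)²·(C(m+1/2)−C(m−1/2))] = 0. -/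
/-- Discrete global kinetic energy conservation on a periodic 1D grid:
with the consistent momentum flux `M = C·ū` and kinetic energy flux
`K = C·u(m)u(m+1)/2`, the convective work decomposes into the continuity
contribution plus a telescoping flux difference, and in particular the total
spurious contribution to kinetic energy vanishes. -/
theorem discrete_global_kinetic_energy_conservation (n : ℕ) [NeZero n]
    (u C M K : ZMod n → ℝ)
    (hM : ∀ m : ZMod n, M m = C m * (u m + u (m + 1)) / 2)
    (hK : ∀ m : ZMod n, K m = C m * u m * u (m + 1) / 2) :
    (∑ m : ZMod n, u m * (M m - M (m - 1))
      = ∑ m : ZMod n, ((1 / 2) * (u m) ^ 2 * (C m - C (m - 1)) + (K m - K (m - 1))))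
    ∧ (∑ m : ZMod n, (K m - K (m - 1)) = 0)
    ∧ (∑ m : ZMod n,
        (u m * (M m - M (m - 1)) - (1 / 2) * (u m) ^ 2 * (C m - C (m - 1))) = 0) := by
  have h1 : ∑ m : ZMod n, u m * (M m - M (m - 1))
      = ∑ m : ZMod n, ((1 / 2) * (u m) ^ 2 * (C m - C (m - 1)) + (K m - K (m - 1))) := by
    apply Finset.sum_congr rfl
    intro m _
    rw [hM m, hM (m - 1), hK m, hK (m - 1), sub_add_cancel]
    ring
  have h2 : ∑ m : ZMod n, (K m - K (m - 1)) = 0 := by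
    rw [Finset.sum_sub_distrib]
    have : ∑ m : ZMod n, K (m - 1) = ∑ m : ZMod n, K m :=
      Fintype.sum_equiv (Equiv.subRight 1) _ _ (fun m => rfl)
    rw [this, sub_self]
  refine ⟨h1, h2, ?_⟩
  rw [Finset.sum_sub_distrib, h1, Finset.sum_add_distrib, h2, add_zero, sub_self]
end

section
/- Uniform-pressure preservation fails for the quadratic-split (CS) internal energy flux in two-phase flow: there exist grids with two phases (volume fractions φ₁, φ₂ = 1 − φ₁, phase densities ρ₁, ρ₂, EOS parameters α₁ ≠ α₂) with uniform velocity u₀ ≠ 0 and uniform pressure p₀ such that the internal-energy flux form ρ̄·ē·ū (product of three separate face averages of mixture density ρ, mixture specific internal energy e, and velocity) yields a nonzero update of ρe that is inconsistent with the update of Σ_l φ_l/α_l from the volume fraction equation, so the reconstructed pressure p^{k+1}(m) = [ρe(m)^{k+1} + Σ_l φ_l(m)^{k+1} β_l/α_l] / [Σ_l φ_l(m)^{k+1}/α_l] differs from p₀ at some cell m. -/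
/-- Arithmetic face average at face `m+1/2`. -/
noncomputable def faceAvg (f : ℤ → ℝ) (m : ℤ) : ℝ := (f m + f (m + 1)) / 2

/-- Mixture density `ρ = φ₁ρ₁ + φ₂ρ₂` with `φ₂ = 1 − φ₁`. -/
noncomputable def mixRho (φ ρa ρb : ℤ → ℝ) (m : ℤ) : ℝ :=
  φ m * ρa m + (1 - φ m) * ρb m

/-- Mixture internal energy per volume under uniform pressure `p₀`:
`ρe = Σ_l φ_l (p₀ − β_l)/α_l`. -/
noncomputable def rhoE0 (α₁ α₂ β₁ β₂ p₀ : ℝ) (φ : ℤ → ℝ) (m : ℤ) : ℝ :=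
  φ m * ((p₀ - β₁) / α₁) + (1 - φ m) * ((p₀ - β₂) / α₂)

/-- Mixture specific internal energy `e = ρe/ρ`. -/
noncomputable def specE (α₁ α₂ β₁ β₂ p₀ : ℝ) (φ ρa ρb : ℤ → ℝ) (m : ℤ) : ℝ :=
  rhoE0 α₁ α₂ β₁ β₂ p₀ φ m / mixRho φ ρa ρb m

/-- The CS internal-energy flux `ρ̄·ē·u₀` at face `m+1/2`. -/
noncomputable def csFlux (α₁ α₂ β₁ β₂ p₀ u₀ : ℝ) (φ ρa ρb : ℤ → ℝ) (m : ℤ) : ℝ :=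
  faceAvg (mixRho φ ρa ρb) m * faceAvg (specE α₁ α₂ β₁ β₂ p₀ φ ρa ρb) m * u₀

/-- Updated mixture internal energy using the CS flux. -/
noncomputable def rhoE1 (α₁ α₂ β₁ β₂ p₀ u₀ Δt Δx : ℝ) (φ ρa ρb : ℤ → ℝ) (m : ℤ) : ℝ :=
  rhoE0 α₁ α₂ β₁ β₂ p₀ φ m
    - (Δt / Δx) * (csFlux α₁ α₂ β₁ β₂ p₀ u₀ φ ρa ρb m
        - csFlux α₁ α₂ β₁ β₂ p₀ u₀ φ ρa ρb (m - 1))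

/-- Updated volume fraction using the quadratic-split convective flux `φ̄·u₀`. -/
noncomputable def phiNew (u₀ Δt Δx : ℝ) (φ : ℤ → ℝ) (m : ℤ) : ℝ :=
  φ m - (Δt / Δx) * u₀ * (faceAvg φ m - faceAvg φ (m - 1))

/-- Reconstructed mixture pressure at step `k+1`. -/
noncomputable def pNew (α₁ α₂ β₁ β₂ p₀ u₀ Δt Δx : ℝ) (φ ρa ρb : ℤ → ℝ) (m : ℤ) : ℝ :=
  (rhoE1 α₁ α₂ β₁ β₂ p₀ u₀ Δt Δx φ ρa ρb m
      + (phiNew u₀ Δt Δx φ m * (β₁ / α₁) + (1 - phiNew u₀ Δt Δx φ m) * (β₂ / α₂)))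
    / (phiNew u₀ Δt Δx φ m / α₁ + (1 - phiNew u₀ Δt Δx φ m) / α₂)

/-- Uniform-pressure preservation fails for the quadratic-split (CS)
internal-energy flux in two-phase flow: there exist two-phase data with
`α₁ ≠ α₂`, nonzero uniform velocity `u₀` and uniform pressure `p₀`, such that
the reconstructed pressure after one update differs from `p₀` at some cell. -/
theorem cs_flux_violates_uniform_pressure :
    ∃ (α₁ α₂ β₁ β₂ u₀ p₀ Δt Δx : ℝ) (φ ρa ρb : ℤ → ℝ),
      α₁ ≠ 0 ∧ α₂ ≠ 0 ∧ α₁ ≠ α₂ ∧ u₀ ≠ 0 ∧ 0 < Δt ∧ 0 < Δx ∧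
      (∀ m : ℤ, mixRho φ ρa ρb m ≠ 0) ∧
      ∃ m : ℤ, pNew α₁ α₂ β₁ β₂ p₀ u₀ Δt Δx φ ρa ρb m ≠ p₀ := by
  refine ⟨1, 2, 0, 0, 1, 1, 1, 1, fun m => if m = 0 then 1 else 0,
    fun _ => 1, fun _ => 2, by norm_num, by norm_num, by norm_num, by norm_num,
    by norm_num, by norm_num, ?_, 1, ?_⟩
  · intro m
    simp only [mixRho]
    split <;> norm_num
  · simp only [pNew, rhoE1, rhoE0, csFlux, phiNew, faceAvg, specE, mixRho]
    norm_num
end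

section
/- Uniform-pressure preservation holds for the proposed QS flux in two-phase flow with no regularization: on a periodic 1D grid with two stiffened-gas phases (parameters α_l ≠ 0, β_l), uniform velocity u₀ and uniform pressure p₀ at step k, if volume fraction is updated by φ_l(m)^{k+1} = φ_l(m)^k − (Δt/Δx)u₀[φ̄_l(m+1/2) − φ̄_l(m−1/2)] and internal energy by (ρe)(m)^{k+1} = (ρe)(m)^k − (Δt/Δx)u₀[(ρe)̄(m+1/2) − (ρe)̄(m−1/2)] with matching arithmetic face averages, and if (ρe)(m)^k = Σ_l φ_l(m)^k (p₀ − β_l)/α_l for all m, then (ρe)(m)^{k+1} = Σ_l φ_l(m)^{k+1} (p₀ − β_l)/α_l for all m; consequently the mixture pressure p(m)^{k+1} = [(ρe)(m)^{k+1} + Σ_l φ_l(m)^{k+1} β_l/α_l]/[Σ_l φ_l(m)^{k+1}/α_l] = p₀ whenever the denominator is nonzero. -/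
/-- Uniform-pressure preservation for the proposed QS flux in two-phase flow
with no regularization: if, at step `k`, the velocity is uniformly `u₀`, the
pressure is uniformly `p₀` (so `ρe = Σ_l φ_l (p₀ − β_l)/α_l`), and the volume
fractions and the mixture internal energy are updated with matching
quadratic-split (arithmetic face average) fluxes, then the isobaric relation
persists at step `k+1`, and the reconstructed mixture pressure equals `p₀`
wherever the EOS denominator is nonzero. -/
theorem qs_flux_uniform_pressure_preservation (n : ℕ) [NeZero n]
    (α₁ α₂ β₁ β₂ u₀ p₀ Δt Δx : ℝ) (hα₁ : α₁ ≠ 0) (hα₂ : α₂ ≠ 0)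
    (hΔt : 0 < Δt) (hΔx : 0 < Δx)
    (φ₁ φ₂ φ₁' φ₂' ρe ρe' : ZMod n → ℝ)
    (hsum : ∀ m, φ₁ m + φ₂ m = 1)
    (hφ₁ : ∀ m, φ₁' m = φ₁ m
      - (Δt / Δx) * u₀ * ((φ₁ m + φ₁ (m + 1)) / 2 - (φ₁ (m - 1) + φ₁ m) / 2))
    (hφ₂ : ∀ m, φ₂' m = φ₂ m
      - (Δt / Δx) * u₀ * ((φ₂ m + φ₂ (m + 1)) / 2 - (φ₂ (m - 1) + φ₂ m) / 2))
    (hρe : ∀ m, ρe' m = ρe m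
      - (Δt / Δx) * u₀ * ((ρe m + ρe (m + 1)) / 2 - (ρe (m - 1) + ρe m) / 2))
    (hinit : ∀ m, ρe m = φ₁ m * ((p₀ - β₁) / α₁) + φ₂ m * ((p₀ - β₂) / α₂)) :
    (∀ m, ρe' m = φ₁' m * ((p₀ - β₁) / α₁) + φ₂' m * ((p₀ - β₂) / α₂))
    ∧ ∀ m, (φ₁' m / α₁ + φ₂' m / α₂) ≠ 0 →
        (ρe' m + (φ₁' m * (β₁ / α₁) + φ₂' m * (β₂ / α₂)))
          / (φ₁' m / α₁ + φ₂' m / α₂) = p₀ := by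
  have key : ∀ m, ρe' m = φ₁' m * ((p₀ - β₁) / α₁) + φ₂' m * ((p₀ - β₂) / α₂) := by
    intro m
    rw [hρe, hφ₁, hφ₂, hinit, hinit, hinit]
    ring
  refine ⟨key, fun m hd => ?_⟩
  rw [key m, div_eq_iff hd]
  field_simp
  ring
end

section
/- Continuous entropy relation from Gibbs and isobaric closure: suppose two phases satisfy Gibbs's relation d(ρ_l e_l) = ρ_l T_l ds_l + h_l dρ_l along particle paths, the mixture internal energy equation D(ρe)/Dt + ρh (∂u/∂x) = Σ_l ∂(ρ_l h_l a_l)/∂x with ρe = Σ_l φ_l ρ_l e_l and ρh = Σ_l φ_l ρ_l h_l, the mass equations D(φ_l ρ_l)/Dt + φ_l ρ_l ∂u/∂x = ∂(ρ_l a_l)/∂x, and the volume-fraction equation Dφ₁/Dt = (φ₁ + ζ₁)∂u/∂x + ∂a₁/∂x with φ₂ = 1 − φ₁. Then Σ_l ρ_l φ_l T_l Ds_l/Dt = Σ_l [∂(ρ_l h_l a_l)/∂x − h_l ∂(ρ_l a_l)/∂x]. In particular if the regularization fluxes a_l vanish identically, then ρ₁φ₁T₁ Ds₁/Dt + ρ₂φ₂T₂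 Ds₂/Dt = 0. -/
/-- Spatial partial derivative of a field `g(x,t)`. -/
noncomputable def dX (g : ℝ → ℝ → ℝ) (x t : ℝ) : ℝ := deriv (fun y => g y t) x

/-- Temporal partial derivative of a field `g(x,t)`. -/
noncomputable def dT (g : ℝ → ℝ → ℝ) (x t : ℝ) : ℝ := deriv (fun s => g x s) t

/-- Material derivative `D/Dt = ∂/∂t + u ∂/∂x` following velocity `u`. -/
noncomputable def matD (u g : ℝ → ℝ → ℝ) (x t : ℝ) : ℝ :=
  dT g x t + u x t * dX g x t

lemma sliceX {g : ℝ → ℝ → ℝ} (hg : ContDiff ℝ (⊤ : ℕ∞) fun q : ℝ × ℝ => g q.1 q.2)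
    (x t : ℝ) : DifferentiableAt ℝ (fun y => g y t) x :=
  by have h := ((hg.differentiable (by simp)) (x, t)).comp x
      ((differentiableAt_id : DifferentiableAt ℝ id x).prodMk (differentiableAt_const t)); exact h

lemma sliceT {g : ℝ → ℝ → ℝ} (hg : ContDiff ℝ (⊤ : ℕ∞) fun q : ℝ × ℝ => g q.1 q.2)
    (x t : ℝ) : DifferentiableAt ℝ (fun s => g x s) t :=
  ((hg.differentiable (by simp)) (x, t)).comp t
    ((differentiableAt_const x).prodMk differentiableAt_id)

lemma matD_mul (u f g : ℝ → ℝ → ℝ) (x t : ℝ)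
    (hfX : DifferentiableAt ℝ (fun y => f y t) x)
    (hfT : DifferentiableAt ℝ (fun s => f x s) t)
    (hgX : DifferentiableAt ℝ (fun y => g y t) x)
    (hgT : DifferentiableAt ℝ (fun s => g x s) t) :
    matD u (fun x t => f x t * g x t) x t
      = f x t * matD u g x t + g x t * matD u f x t := by
  simp only [matD, dX, dT]
  rw [deriv_fun_mul hfX hgX, deriv_fun_mul hfT hgT]
  ring

lemma matD_add (u f g : ℝ → ℝ → ℝ) (x t : ℝ)
    (hfX : DifferentiableAt ℝ (fun y => f y t) x)
    (hfT : DifferentiableAt ℝ (fun s => f x s) t)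
    (hgX : DifferentiableAt ℝ (fun y => g y t) x)
    (hgT : DifferentiableAt ℝ (fun s => g x s) t) :
    matD u (fun x t => f x t + g x t) x t = matD u f x t + matD u g x t := by
  simp only [matD, dX, dT]
  rw [deriv_fun_add hfX hgX, deriv_fun_add hfT hgT]
  ring

/-- Continuous entropy relation from Gibbs's relation and isobaric closure for
the two-phase five-equation model:
`Σ_l ρ_l φ_l T_l Ds_l/Dt = Σ_l [∂(ρ_l h_l a_l)/∂x − h_l ∂(ρ_l a_l)/∂x]`,
and in particular if the regularization fluxes vanish identically then
`ρ₁φ₁T₁ Ds₁/Dt + ρ₂φ₂T₂ Ds₂/Dt = 0`. -/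
theorem continuous_entropy_relation
    (u pr ζ₁ : ℝ → ℝ → ℝ)
    (φ₁ φ₂ ρ₁ ρ₂ e₁ e₂ h₁ h₂ T₁ T₂ s₁ s₂ a₁ a₂ : ℝ → ℝ → ℝ)
    (hsm : ∀ g ∈ ([u, pr, ζ₁, φ₁, φ₂, ρ₁, ρ₂, e₁, e₂, h₁, h₂, T₁, T₂, s₁, s₂,
        a₁, a₂] : List (ℝ → ℝ → ℝ)),
      ContDiff ℝ (⊤ : ℕ∞) fun q : ℝ × ℝ => g q.1 q.2)
    (hρpos : ∀ x t, 0 < ρ₁ x t ∧ 0 < ρ₂ x t)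
    (hTpos : ∀ x t, 0 < T₁ x t ∧ 0 < T₂ x t)
    (hφsum : ∀ x t, φ₁ x t + φ₂ x t = 1)
    (hh₁ : ∀ x t, h₁ x t = e₁ x t + pr x t / ρ₁ x t)
    (hh₂ : ∀ x t, h₂ x t = e₂ x t + pr x t / ρ₂ x t)
    -- Gibbs's relation along particle paths for each phase:
    (hGibbs₁ : ∀ x t, matD u (fun x t => ρ₁ x t * e₁ x t) x t
      = ρ₁ x t * T₁ x t * matD u s₁ x t + h₁ x t * matD u ρ₁ x t)
    (hGibbs₂ : ∀ x t, matD u (fun x t => ρ₂ x t * e₂ x t) x t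
      = ρ₂ x t * T₂ x t * matD u s₂ x t + h₂ x t * matD u ρ₂ x t)
    -- mixture internal energy equation:
    (hIE : ∀ x t, matD u
        (fun x t => φ₁ x t * ρ₁ x t * e₁ x t + φ₂ x t * ρ₂ x t * e₂ x t) x t
      + (φ₁ x t * ρ₁ x t * h₁ x t + φ₂ x t * ρ₂ x t * h₂ x t) * dX u x t
      = dX (fun x t => ρ₁ x t * h₁ x t * a₁ x t) x t
        + dX (fun x t => ρ₂ x t * h₂ x t * a₂ x t) x t)
    -- mass equations:
    (hmass₁ : ∀ x t, matD u (fun x t => φ₁ x t * ρ₁ x t) x t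
      + φ₁ x t * ρ₁ x t * dX u x t = dX (fun x t => ρ₁ x t * a₁ x t) x t)
    (hmass₂ : ∀ x t, matD u (fun x t => φ₂ x t * ρ₂ x t) x t
      + φ₂ x t * ρ₂ x t * dX u x t = dX (fun x t => ρ₂ x t * a₂ x t) x t)
    -- volume-fraction equation:
    (hvol : ∀ x t, matD u φ₁ x t
      = (φ₁ x t + ζ₁ x t) * dX u x t + dX a₁ x t) :
    (∀ x t,
      ρ₁ x t * φ₁ x t * T₁ x t * matD u s₁ x t
        + ρ₂ x t * φ₂ x t * T₂ x t * matD u s₂ x t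
      = (dX (fun x t => ρ₁ x t * h₁ x t * a₁ x t) x t
          - h₁ x t * dX (fun x t => ρ₁ x t * a₁ x t) x t)
        + (dX (fun x t => ρ₂ x t * h₂ x t * a₂ x t) x t
          - h₂ x t * dX (fun x t => ρ₂ x t * a₂ x t) x t))
    ∧ ((∀ x t, a₁ x t = 0) → (∀ x t, a₂ x t = 0) →
      ∀ x t, ρ₁ x t * φ₁ x t * T₁ x t * matD u s₁ x t
        + ρ₂ x t * φ₂ x t * T₂ x t * matD u s₂ x t = 0) := by
  have sφ₁ := hsm φ₁ (by simp)
  have sφ₂ := hsm φ₂ (by simp)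
  have sρ₁ := hsm ρ₁ (by simp)
  have sρ₂ := hsm ρ₂ (by simp)
  have se₁ := hsm e₁ (by simp)
  have se₂ := hsm e₂ (by simp)
  have key : ∀ x t,
      ρ₁ x t * φ₁ x t * T₁ x t * matD u s₁ x t
        + ρ₂ x t * φ₂ x t * T₂ x t * matD u s₂ x t
      = (dX (fun x t => ρ₁ x t * h₁ x t * a₁ x t) x t
          - h₁ x t * dX (fun x t => ρ₁ x t * a₁ x t) x t)
        + (dX (fun x t => ρ₂ x t * h₂ x t * a₂ x t) x t
          - h₂ x t * dX (fun x t => ρ₂ x t * a₂ x t) x t) := by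
    intro x t
    -- product rules
    have pρe₁ := matD_mul u ρ₁ e₁ x t (sliceX sρ₁ x t) (sliceT sρ₁ x t)
      (sliceX se₁ x t) (sliceT se₁ x t)
    have pρe₂ := matD_mul u ρ₂ e₂ x t (sliceX sρ₂ x t) (sliceT sρ₂ x t)
      (sliceX se₂ x t) (sliceT se₂ x t)
    have pφρ₁ := matD_mul u φ₁ ρ₁ x t (sliceX sφ₁ x t) (sliceT sφ₁ x t)
      (sliceX sρ₁ x t) (sliceT sρ₁ x t)
    have pφρ₂ := matD_mul u φ₂ ρ₂ x t (sliceX sφ₂ x t) (sliceT sφ₂ x t)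
      (sliceX sρ₂ x t) (sliceT sρ₂ x t)
    have p₁ := matD_mul u (fun x t => φ₁ x t * ρ₁ x t) e₁ x t
      ((sliceX sφ₁ x t).mul (sliceX sρ₁ x t))
      ((sliceT sφ₁ x t).mul (sliceT sρ₁ x t))
      (sliceX se₁ x t) (sliceT se₁ x t)
    have p₂ := matD_mul u (fun x t => φ₂ x t * ρ₂ x t) e₂ x t
      ((sliceX sφ₂ x t).mul (sliceX sρ₂ x t))
      ((sliceT sφ₂ x t).mul (sliceT sρ₂ x t))
      (sliceX se₂ x t) (sliceT se₂ x t)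
    have psum := matD_add u (fun x t => φ₁ x t * ρ₁ x t * e₁ x t)
      (fun x t => φ₂ x t * ρ₂ x t * e₂ x t) x t
      (((sliceX sφ₁ x t).mul (sliceX sρ₁ x t)).mul (sliceX se₁ x t))
      (((sliceT sφ₁ x t).mul (sliceT sρ₁ x t)).mul (sliceT se₁ x t))
      (((sliceX sφ₂ x t).mul (sliceX sρ₂ x t)).mul (sliceX se₂ x t))
      (((sliceT sφ₂ x t).mul (sliceT sρ₂ x t)).mul (sliceT se₂ x t))
    -- Dφ₁ + Dφ₂ = 0
    have hφ : matD u φ₁ x t + matD u φ₂ x t = 0 := by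
      have hXc : (fun y => φ₁ y t + φ₂ y t) = fun _ => (1 : ℝ) :=
        funext fun y => hφsum y t
      have hTc : (fun s => φ₁ x s + φ₂ x s) = fun _ => (1 : ℝ) :=
        funext fun s => hφsum x s
      have hx : dX φ₁ x t + dX φ₂ x t = 0 := by
        have := deriv_fun_add (sliceX sφ₁ x t) (sliceX sφ₂ x t) (x := x)
        simp only [dX]
        rw [← this, hXc]
        simp
      have ht : dT φ₁ x t + dT φ₂ x t = 0 := by
        have := deriv_fun_add (sliceT sφ₁ x t) (sliceT sφ₂ x t) (x := t)
        simp only [dT]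
        rw [← this, hTc]
        simp
      simp only [matD]
      linear_combination ht + u x t * hx
    have hρ₁ := (hρpos x t).1.ne'
    have hρ₂ := (hρpos x t).2.ne'
    have hp₁ : ρ₁ x t * h₁ x t = ρ₁ x t * e₁ x t + pr x t := by
      rw [hh₁ x t]; field_simp
    have hp₂ : ρ₂ x t * h₂ x t = ρ₂ x t * e₂ x t + pr x t := by
      rw [hh₂ x t]; field_simp
    have g₁ := hGibbs₁ x t
    have g₂ := hGibbs₂ x t
    rw [pρe₁] at g₁
    rw [pρe₂] at g₂
    have en := hIE x t
    rw [psum, p₁, p₂, pφρ₁, pφρ₂] at en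
    have m₁ := hmass₁ x t
    rw [pφρ₁] at m₁
    have m₂ := hmass₂ x t
    rw [pφρ₂] at m₂
    linear_combination (-(φ₁ x t)) * g₁ + (-(φ₂ x t)) * g₂ + en
      + (-(h₁ x t)) * m₁ + (-(h₂ x t)) * m₂
      + (matD u φ₁ x t) * hp₁ + (matD u φ₂ x t) * hp₂ + (pr x t) * hφ
  refine ⟨key, fun ha₁ ha₂ x t => ?_⟩
  have z₁ : (fun x t => ρ₁ x t * h₁ x t * a₁ x t) = fun _ _ => (0 : ℝ) := by
    funext x t; rw [ha₁]; ring
  have z₂ : (fun x t => ρ₂ x t * h₂ x t * a₂ x t) = fun _ _ => (0 : ℝ) := by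
    funext x t; rw [ha₂]; ring
  have z₃ : (fun x t => ρ₁ x t * a₁ x t) = fun _ _ => (0 : ℝ) := by
    funext x t; rw [ha₁]; ring
  have z₄ : (fun x t => ρ₂ x t * a₂ x t) = fun _ _ => (0 : ℝ) := by
    funext x t; rw [ha₂]; ring
  have := key x t
  rw [z₁, z₂, z₃, z₄] at this
  simpa [dX] using this
end
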